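/- arXiv:2510.08725 — 12 statements merged into one kernel-verified Lean document; each statement's English description precedes it below -/
import Mathlib

section
/- FX transcript consistency (Proposition 2 of the paper): Assume x₁, …, x_j are pairwise distinct and y₁, …, y_j are pairwise distinct. Then for every i with 1 ≤ i ≤ j, E^{T_j}(x_i ⊕ k₁) ⊕ k₂ = y_i. -/
/-- The reprogrammed permutations `E^{T_i}` of the FX hybrid argument:
`E^{T_0} = E` and `E^{T_i} = swap(E^{T_{i-1}}(x_i ⊕ k₁), y_i ⊕ k₂) ∘ E^{T_{i-1}}`. -/
def fxReprog {V : Type*} [DecidableEq V] [Add V]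
    (E : Equiv.Perm V) (k₁ k₂ : V) (x y : ℕ → V) : ℕ → Equiv.Perm V
  | 0 => E
  | i + 1 =>
      Equiv.swap (fxReprog E k₁ k₂ x y i (x (i + 1) + k₁)) (y (i + 1) + k₂) *
        fxReprog E k₁ k₂ x y i

theorem fxReprog_key {n j : ℕ}
    (E : Equiv.Perm (Fin n → ZMod 2)) (k₁ k₂ : Fin n → ZMod 2)
    (x y : ℕ → Fin n → ZMod 2)
    (hx : ∀ a b, 1 ≤ a → a ≤ j → 1 ≤ b → b ≤ j → a ≠ b → x a ≠ x b)
    (hy : ∀ a b, 1 ≤ a → a ≤ j → 1 ≤ b → b ≤ j → a ≠ b → y a ≠ y b) :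
    ∀ m, m ≤ j → ∀ i, 1 ≤ i → i ≤ m →
      fxReprog E k₁ k₂ x y m (x i + k₁) = y i + k₂ := by
  intro m
  induction m with
  | zero => intro _ i h1 h2; omega
  | succ m ih =>
    intro hmj i h1 h2
    rcases eq_or_lt_of_le h2 with h | h
    · simp only [fxReprog, Equiv.Perm.mul_apply, h]
      exact Equiv.swap_apply_left _ _
    · have him : i ≤ m := by omega
      have hne : i ≠ m + 1 := by omega
      have hF := ih (by omega) i h1 him
      simp only [fxReprog, Equiv.Perm.mul_apply, hF]
      apply Equiv.swap_apply_of_ne_of_ne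
      · intro hc
        have : x i + k₁ = x (m + 1) + k₁ := by
          apply (fxReprog E k₁ k₂ x y m).injective
          rw [hF, hc]
        have hxx : x i = x (m + 1) := by
          have := congrArg (· + k₁) this
          simpa using this
        exact hx i (m + 1) h1 (by omega) (by omega) hmj hne hxx
      · intro hc
        have hyy : y i = y (m + 1) := by
          have := congrArg (· + k₂) hc
          simpa using this
        exact hy i (m + 1) h1 (by omega) (by omega) hmj hne hyy

/-- FX transcript consistency (Proposition 2): if the `xᵢ` are pairwise distinct and the
`yᵢ` are pairwise distinct, then `E^{T_j}(x_i ⊕ k₁) ⊕ k₂ = y_i` for all `1 ≤ i ≤ j`. -/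
theorem fx_transcript_consistency {n j : ℕ} (hn : 1 ≤ n)
    (E : Equiv.Perm (Fin n → ZMod 2)) (k₁ k₂ : Fin n → ZMod 2)
    (x y : ℕ → Fin n → ZMod 2)
    (hx : ∀ a b, 1 ≤ a → a ≤ j → 1 ≤ b → b ≤ j → a ≠ b → x a ≠ x b)
    (hy : ∀ a b, 1 ≤ a → a ≤ j → 1 ≤ b → b ≤ j → a ≠ b → y a ≠ y b)
    (i : ℕ) (hi1 : 1 ≤ i) (hij : i ≤ j) :
    fxReprog E k₁ k₂ x y j (x i + k₁) + k₂ = y i := by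
  rw [fxReprog_key E k₁ k₂ x y hx hy j le_rfl i hi1 hij]
  rw [add_assoc]
  have : k₂ + k₂ = 0 := by
    funext a; exact CharTwo.add_self_eq_zero (k₂ a)
  rw [this, add_zero]
end

section
/- FX resampling invariance on transcript points (Proposition 3 of the paper): Fix additionally x_{j+1} ∈ V with x_{j+1} ∉ {x₁, …, x_j} and s ∈ V with s ∉ {x₁ ⊕ k₁, …, x_j ⊕ k₁}. Let E' = E ∘ swap(x_{j+1} ⊕ k₁, s), and define E'^{T_r} (0 ≤ r ≤ j) by the same recursion with E replaced by E', i.e. E'^{T_0} = E' and E'^{T_r} = swap(E'^{T_{r−1}}(x_r ⊕ k₁), y_r ⊕ k₂) ∘ E'^{T_{r−1}}. Then for all i with 1 ≤ i ≤ j and all r with 0 ≤ r ≤ j, E'^{T_r}(x_i ⊕ k₁) = E^{T_r}(x_i ⊕ k₁). -/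
/-- FX resampling invariance on transcript points (Proposition 3): with
`E' = E ∘ swap(x_{j+1} ⊕ k₁, s)`, for `x_{j+1}` fresh and `s` outside
`{x₁ ⊕ k₁, …, x_j ⊕ k₁}`, the reprogrammed ciphers built from `E'` and from `E`
agree on all transcript points `x_i ⊕ k₁`, at every stage `r ≤ j`. -/
theorem fx_resampling_invariance {n j : ℕ} (hn : 1 ≤ n)
    (E : Equiv.Perm (Fin n → ZMod 2)) (k₁ k₂ : Fin n → ZMod 2)
    (x y : ℕ → Fin n → ZMod 2) (s : Fin n → ZMod 2)
    (hxj : ∀ i, 1 ≤ i → i ≤ j → x (j + 1) ≠ x i)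
    (hs : ∀ i, 1 ≤ i → i ≤ j → s ≠ x i + k₁) :
    ∀ i r, 1 ≤ i → i ≤ j → r ≤ j →
      fxReprog (E * Equiv.swap (x (j + 1) + k₁) s) k₁ k₂ x y r (x i + k₁) =
        fxReprog E k₁ k₂ x y r (x i + k₁) := by
  suffices h : ∀ r, r ≤ j → ∀ i, 1 ≤ i → i ≤ j →
      fxReprog (E * Equiv.swap (x (j + 1) + k₁) s) k₁ k₂ x y r (x i + k₁) =
        fxReprog E k₁ k₂ x y r (x i + k₁) from
    fun i r hi hij hrj => h r hrj i hi hij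
  intro r
  induction r with
  | zero =>
    intro _ i hi hij
    simp only [fxReprog, Equiv.Perm.mul_apply]
    rw [Equiv.swap_apply_of_ne_of_ne]
    · intro hc
      exact hxj i hi hij (add_right_cancel hc).symm
    · exact (hs i hi hij).symm
  | succ r ih =>
    intro hrj i hi hij
    have hr : r ≤ j := Nat.le_of_succ_le hrj
    simp only [fxReprog, Equiv.Perm.mul_apply,
      ih hr i hi hij, ih hr (r + 1) (Nat.succ_le_succ (Nat.zero_le r)) hrj]
end

section
/- FX hybrid permutation identity (core of Lemma 4 of the paper): Fix x_{j+1} ∈ V with x_{j+1} ∉ {x₁, …, x_j} and s ∈ V with s ∉ {x₁ ⊕ k₁, …, x_j ⊕ k₁}. Let E' = E ∘ swap(x_{j+1} ⊕ k₁, s) and define E'^{T_r} by the same recursion with E replaced by E'. Set y_{j+1} = E^{T_j}(s) ⊕ k₂ and E^{T_{j+1}} = swap(E^{T_j}(x_{j+1} ⊕ k₁), y_{j+1} ⊕ k₂) ∘ E^{T_j}. Then E'^{T_j} = E^{T_{j+1}} as permutations of V. -/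
/-- FX hybrid permutation identity (core of Lemma 4): with
`E' = E ∘ swap(x_{j+1} ⊕ k₁, s)`, `y_{j+1} = E^{T_j}(s) ⊕ k₂`, and
`E^{T_{j+1}} = swap(E^{T_j}(x_{j+1} ⊕ k₁), y_{j+1} ⊕ k₂) ∘ E^{T_j}`,
we have `E'^{T_j} = E^{T_{j+1}}` as permutations. -/
theorem fx_hybrid_perm_identity {n j : ℕ} (hn : 1 ≤ n)
    (E : Equiv.Perm (Fin n → ZMod 2)) (k₁ k₂ : Fin n → ZMod 2)
    (x y : ℕ → Fin n → ZMod 2) (s : Fin n → ZMod 2)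
    (hxj : ∀ i, 1 ≤ i → i ≤ j → x (j + 1) ≠ x i)
    (hs : ∀ i, 1 ≤ i → i ≤ j → s ≠ x i + k₁)
    (yj1 : Fin n → ZMod 2)
    (hyj1 : yj1 = fxReprog E k₁ k₂ x y j s + k₂) :
    fxReprog (E * Equiv.swap (x (j + 1) + k₁) s) k₁ k₂ x y j =
      Equiv.swap (fxReprog E k₁ k₂ x y j (x (j + 1) + k₁)) (yj1 + k₂) *
        fxReprog E k₁ k₂ x y j := by
  set σ := Equiv.swap (x (j + 1) + k₁) s with hσ
  -- key: fxReprog (E * σ) i = fxReprog E i * σ for all i ≤ j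
  have key : ∀ i, i ≤ j →
      fxReprog (E * σ) k₁ k₂ x y i = fxReprog E k₁ k₂ x y i * σ := by
    intro i hi
    induction i with
    | zero => rfl
    | succ i ih =>
      have hij : i ≤ j := Nat.le_of_succ_le hi
      have h1 : x (j + 1) + k₁ ≠ x (i + 1) + k₁ := by
        intro h
        exact hxj (i + 1) (Nat.succ_le_succ (Nat.zero_le i)) hi (add_right_cancel h)
      have h2 : s ≠ x (i + 1) + k₁ := hs (i + 1) (Nat.succ_le_succ (Nat.zero_le i)) hi
      have hfix : σ (x (i + 1) + k₁) = x (i + 1) + k₁ :=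
        Equiv.swap_apply_of_ne_of_ne (Ne.symm h1) (Ne.symm h2)
      show Equiv.swap (fxReprog (E * σ) k₁ k₂ x y i (x (i + 1) + k₁)) (y (i + 1) + k₂) *
          fxReprog (E * σ) k₁ k₂ x y i = _
      rw [ih hij]
      show Equiv.swap ((fxReprog E k₁ k₂ x y i) (σ (x (i + 1) + k₁))) (y (i + 1) + k₂) *
          (fxReprog E k₁ k₂ x y i * σ) = _
      rw [hfix, ← mul_assoc]
      rfl
  have hy : yj1 + k₂ = fxReprog E k₁ k₂ x y j s := by
    rw [hyj1, add_assoc]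
    have : k₂ + k₂ = 0 := by
      funext i; exact CharTwo.add_self_eq_zero (k₂ i)
    rw [this, add_zero]
  rw [key j le_rfl, hy, Equiv.swap_apply_apply, mul_assoc]
  simp [hσ]
end

section
/- FX forward-query value identity (from the proof of Lemma 4 of the paper): Fix x_{j+1} ∈ V with x_{j+1} ∉ {x₁, …, x_j} and s ∈ V with s ∉ {x₁ ⊕ k₁, …, x_j ⊕ k₁}. Let E' = E ∘ swap(x_{j+1} ⊕ k₁, s) and define E'^{T_r} by the same recursion with E replaced by E'. Then E'^{T_j}(x_{j+1} ⊕ k₁) = E^{T_j}(s); equivalently, the FX oracle built from E'^{T_j} answers the (j+1)st forward query x_{j+1} with E'^{T_j}(x_{j+1} ⊕ k₁) ⊕ k₂ = E^{T_j}(s) ⊕ k₂. -/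
lemma fxReprog_mul_fixed {V : Type*} [DecidableEq V] [Add V]
    (E σ : Equiv.Perm V) (k₁ k₂ : V) (x y : ℕ → V) (r : ℕ)
    (h : ∀ i, 1 ≤ i → i ≤ r → σ (x i + k₁) = x i + k₁) :
    fxReprog (E * σ) k₁ k₂ x y r = fxReprog E k₁ k₂ x y r * σ := by
  induction r with
  | zero => rfl
  | succ r ih =>
    have ih' := ih (fun i h1 h2 => h i h1 (Nat.le_succ_of_le h2))
    have hv : fxReprog (E * σ) k₁ k₂ x y r (x (r + 1) + k₁) =
        fxReprog E k₁ k₂ x y r (x (r + 1) + k₁) := by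
      rw [ih']
      simp [Equiv.Perm.mul_apply, h (r + 1) (Nat.le_add_left 1 r) le_rfl]
    show Equiv.swap (fxReprog (E * σ) k₁ k₂ x y r (x (r + 1) + k₁)) (y (r + 1) + k₂) *
        fxReprog (E * σ) k₁ k₂ x y r = _
    rw [hv, ih']
    rfl

/-- FX forward-query value identity (from the proof of Lemma 4): with
`E' = E ∘ swap(x_{j+1} ⊕ k₁, s)`, one has `E'^{T_j}(x_{j+1} ⊕ k₁) = E^{T_j}(s)`;
equivalently, the FX oracle built from `E'^{T_j}` answers the `(j+1)`st forward
query with `E'^{T_j}(x_{j+1} ⊕ k₁) ⊕ k₂ = E^{T_j}(s) ⊕ k₂`. -/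
theorem fx_forward_query_value {n j : ℕ} (hn : 1 ≤ n)
    (E : Equiv.Perm (Fin n → ZMod 2)) (k₁ k₂ : Fin n → ZMod 2)
    (x y : ℕ → Fin n → ZMod 2) (s : Fin n → ZMod 2)
    (hxj : ∀ i, 1 ≤ i → i ≤ j → x (j + 1) ≠ x i)
    (hs : ∀ i, 1 ≤ i → i ≤ j → s ≠ x i + k₁) :
    fxReprog (E * Equiv.swap (x (j + 1) + k₁) s) k₁ k₂ x y j (x (j + 1) + k₁) =
        fxReprog E k₁ k₂ x y j s ∧
    fxReprog (E * Equiv.swap (x (j + 1) + k₁) s) k₁ k₂ x y j (x (j + 1) + k₁) + k₂ =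
        fxReprog E k₁ k₂ x y j s + k₂ := by
  have key : fxReprog (E * Equiv.swap (x (j + 1) + k₁) s) k₁ k₂ x y j (x (j + 1) + k₁) =
      fxReprog E k₁ k₂ x y j s := by
    rw [fxReprog_mul_fixed]
    · simp [Equiv.Perm.mul_apply, Equiv.swap_apply_left]
    · intro i h1 h2
      apply Equiv.swap_apply_of_ne_of_ne
      · intro hc
        exact hxj i h1 h2 (by have := add_right_cancel hc; exact this.symm)
      · exact fun hc => hs i h1 h2 hc.symm
  exact ⟨key, by rw [key]⟩
end

section
/- FX complement bijection (from the proof of Lemma 5 of the paper): Assume x₁, …, x_j are pairwise distinct and y₁, …, y_j are pairwise distinct. Then the permutation E^{T_j} maps the set V \ {x₁ ⊕ k₁, …, x_j ⊕ k₁} bijectively onto the set V \ {y₁ ⊕ k₂, …, y_j ⊕ k₂}; that is, the image of V \ {x₁ ⊕ k₁, …, x_j ⊕ k₁} under E^{T_j} equals V \ {y₁ ⊕ k₂, …, y_j ⊕ k₂}. -/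
lemma fx_key {V : Type*} [DecidableEq V] [AddGroup V]
    (E : Equiv.Perm V) (k₁ k₂ : V) (x y : ℕ → V) (j : ℕ)
    (hx : ∀ a b, 1 ≤ a → a ≤ j → 1 ≤ b → b ≤ j → a ≠ b → x a ≠ x b)
    (hy : ∀ a b, 1 ≤ a → a ≤ j → 1 ≤ b → b ≤ j → a ≠ b → y a ≠ y b) :
    ∀ i, 1 ≤ i → i ≤ j → fxReprog E k₁ k₂ x y j (x i + k₁) = y i + k₂ := by
  induction j with
  | zero => intro i h1 h2; omega
  | succ j ih =>
    intro i h1 h2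
    have hx' : ∀ a b, 1 ≤ a → a ≤ j → 1 ≤ b → b ≤ j → a ≠ b → x a ≠ x b :=
      fun a b ha hb hc hd he => hx a b ha (hb.trans (Nat.le_succ j)) hc (hd.trans (Nat.le_succ j)) he
    have hy' : ∀ a b, 1 ≤ a → a ≤ j → 1 ≤ b → b ≤ j → a ≠ b → y a ≠ y b :=
      fun a b ha hb hc hd he => hy a b ha (hb.trans (Nat.le_succ j)) hc (hd.trans (Nat.le_succ j)) he
    show Equiv.swap (fxReprog E k₁ k₂ x y j (x (j + 1) + k₁)) (y (j + 1) + k₂)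
        (fxReprog E k₁ k₂ x y j (x i + k₁)) = y i + k₂
    rcases eq_or_ne i (j + 1) with rfl | hne
    · simp [Equiv.swap_apply_left]
    · have hij : i ≤ j := by omega
      have hval := ih hx' hy' i h1 hij
      rw [hval]
      have h1' : y i + k₂ ≠ fxReprog E k₁ k₂ x y j (x (j + 1) + k₁) := by
        rw [← hval]
        intro h
        have := (fxReprog E k₁ k₂ x y j).injective h
        have hxx : x i ≠ x (j + 1) := hx i (j+1) h1 (hij.trans (Nat.le_succ j)) (by omega) le_rfl hne
        exact hxx (by have := add_right_cancel this; exact this)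
      have h2' : y i + k₂ ≠ y (j + 1) + k₂ := by
        intro h
        exact hy i (j+1) h1 (hij.trans (Nat.le_succ j)) (by omega) le_rfl hne (add_right_cancel h)
      exact Equiv.swap_apply_of_ne_of_ne h1' h2'

/-- FX complement bijection (from the proof of Lemma 5): if the `xᵢ` are pairwise
distinct and the `yᵢ` are pairwise distinct, then `E^{T_j}` maps
`V \ {x₁ ⊕ k₁, …, x_j ⊕ k₁}` bijectively onto `V \ {y₁ ⊕ k₂, …, y_j ⊕ k₂}`. -/
theorem fx_complement_bijection {n j : ℕ} (hn : 1 ≤ n)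
    (E : Equiv.Perm (Fin n → ZMod 2)) (k₁ k₂ : Fin n → ZMod 2)
    (x y : ℕ → Fin n → ZMod 2)
    (hx : ∀ a b, 1 ≤ a → a ≤ j → 1 ≤ b → b ≤ j → a ≠ b → x a ≠ x b)
    (hy : ∀ a b, 1 ≤ a → a ≤ j → 1 ≤ b → b ≤ j → a ≠ b → y a ≠ y b) :
    (fun z => fxReprog E k₁ k₂ x y j z) ''
        (Set.univ \ ((fun i => x i + k₁) '' Set.Icc 1 j)) =
      Set.univ \ ((fun i => y i + k₂) '' Set.Icc 1 j) := by
  set P := fxReprog E k₁ k₂ x y j with hP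
  have hinj : Function.Injective (fun z => P z) := P.injective
  rw [Set.image_diff hinj, Set.image_univ, Set.range_eq_univ.mpr P.surjective,
    Set.image_image]
  congr 1
  apply Set.image_congr
  intro i hi
  exact fx_key E k₁ k₂ x y j hx hy i hi.1 hi.2
end

section
/- FX response-distribution identity (Lemma 5 of the paper): Assume x₁, …, x_j are pairwise distinct, y₁, …, y_j are pairwise distinct, and j < 2^n. Then the pushforward of the uniform probability distribution on the nonempty set V \ {x₁ ⊕ k₁, …, x_j ⊕ k₁} under the map s ↦ E^{T_j}(s) ⊕ k₂ is the uniform probability distribution on V \ {y₁, …, y_j}. -/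
private lemma uo_congr {α : Type*} {s t : Finset α} (h : s = t) (hs : s.Nonempty)
    (ht : t.Nonempty) : PMF.uniformOfFinset s hs = PMF.uniformOfFinset t ht := by
  subst h; rfl

private lemma map_uniform_equiv {α β : Type*} [DecidableEq α] [DecidableEq β]
    (g : α ≃ β) (s : Finset α) (hs : s.Nonempty) :
    PMF.map g (PMF.uniformOfFinset s hs) =
      PMF.uniformOfFinset (s.image g) (hs.image g) := by
  ext b
  rw [PMF.map_apply, tsum_eq_single (g.symm b) (by
    intro a ha
    have : b ≠ g a := fun h => ha (by simp [h])
    simp [this])]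
  have hmem : b ∈ s.image g ↔ g.symm b ∈ s := by
    simp [Finset.mem_image]
    constructor
    · rintro ⟨a, ha, rfl⟩; simpa using ha
    · intro h; exact ⟨g.symm b, h, by simp⟩
  rw [Equiv.apply_symm_apply, if_pos rfl]
  simp only [PMF.uniformOfFinset_apply, Finset.card_image_of_injective _ g.injective]
  split_ifs with h1 h2 <;> first | rfl | exact absurd (hmem.mpr h1) h2 | exact absurd (hmem.mp ‹_›) h1

private lemma fxReprog_apply_mem {V : Type*} [DecidableEq V] [AddCommGroup V]
    (E : Equiv.Perm V) (k₁ k₂ : V) (x y : ℕ → V) (m : ℕ)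
    (hx : ∀ a b, 1 ≤ a → a ≤ m → 1 ≤ b → b ≤ m → a ≠ b → x a ≠ x b)
    (hy : ∀ a b, 1 ≤ a → a ≤ m → 1 ≤ b → b ≤ m → a ≠ b → y a ≠ y b) :
    ∀ i, 1 ≤ i → i ≤ m → fxReprog E k₁ k₂ x y m (x i + k₁) = y i + k₂ := by
  induction m with
  | zero => intro i h1 h0; omega
  | succ m ih =>
    intro i h1 hi
    show (Equiv.swap (fxReprog E k₁ k₂ x y m (x (m + 1) + k₁)) (y (m + 1) + k₂))
        (fxReprog E k₁ k₂ x y m (x i + k₁)) = y i + k₂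
    rcases eq_or_lt_of_le hi with h | h
    · rw [h, Equiv.swap_apply_left]
    · have hi' : i ≤ m := by omega
      have hv := ih (fun a b h1 h2 h3 h4 h5 => hx a b h1 (by omega) h3 (by omega) h5)
        (fun a b h1 h2 h3 h4 h5 => hy a b h1 (by omega) h3 (by omega) h5) i h1 hi'
      rw [Equiv.swap_apply_of_ne_of_ne]
      · exact hv
      · intro hcon
        have := (fxReprog E k₁ k₂ x y m).injective hcon
        have hne : x i ≠ x (m + 1) := hx i (m + 1) h1 (by omega) (by omega) le_rfl (by omega)
        exact hne (by simpa using this)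
      · rw [hv]
        intro hcon
        have : y i = y (m + 1) := by simpa using hcon
        exact hy i (m + 1) h1 (by omega) (by omega) le_rfl (by omega) this

/-- FX response-distribution identity (Lemma 5): if the `xᵢ` are pairwise distinct,
the `yᵢ` are pairwise distinct, and `j < 2^n`, then pushing the uniform distribution
on `V \ {x₁ ⊕ k₁, …, x_j ⊕ k₁}` forward along `s ↦ E^{T_j}(s) ⊕ k₂` gives the
uniform distribution on `V \ {y₁, …, y_j}`. -/
theorem fx_response_distribution {n j : ℕ} (hn : 1 ≤ n)
    (E : Equiv.Perm (Fin n → ZMod 2)) (k₁ k₂ : Fin n → ZMod 2)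
    (x y : ℕ → Fin n → ZMod 2)
    (hx : ∀ a b, 1 ≤ a → a ≤ j → 1 ≤ b → b ≤ j → a ≠ b → x a ≠ x b)
    (hy : ∀ a b, 1 ≤ a → a ≤ j → 1 ≤ b → b ≤ j → a ≠ b → y a ≠ y b)
    (hj : j < 2 ^ n) :
    ∀ (hS : (Finset.univ \ (Finset.Icc 1 j).image (fun i => x i + k₁)).Nonempty)
      (hT : (Finset.univ \ (Finset.Icc 1 j).image (fun i => y i)).Nonempty),
      PMF.map (fun s => fxReprog E k₁ k₂ x y j s + k₂)
          (PMF.uniformOfFinset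
            (Finset.univ \ (Finset.Icc 1 j).image (fun i => x i + k₁)) hS) =
        PMF.uniformOfFinset
          (Finset.univ \ (Finset.Icc 1 j).image (fun i => y i)) hT := by
  intro hS hT
  have h2 : ∀ a : ZMod 2, a + a = 0 := by decide
  have hself : ∀ v : Fin n → ZMod 2, v + v = 0 := fun v => funext fun i => h2 (v i)
  set g : (Fin n → ZMod 2) ≃ (Fin n → ZMod 2) :=
    (fxReprog E k₁ k₂ x y j).trans (Equiv.addRight k₂) with hg
  have hfun : (fun s => fxReprog E k₁ k₂ x y j s + k₂) = ⇑g := rfl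
  rw [hfun, map_uniform_equiv]
  apply uo_congr
  rw [Finset.image_sdiff _ _ g.injective, Finset.image_univ_equiv, Finset.image_image]
  congr 1
  apply Finset.image_congr
  intro i hi
  simp only [Finset.mem_coe, Finset.mem_Icc] at hi
  show g (x i + k₁) = y i
  have := fxReprog_apply_mem E k₁ k₂ x y j hx hy i hi.1 hi.2
  show fxReprog E k₁ k₂ x y j (x i + k₁) + k₂ = y i
  rw [this, add_assoc, hself, add_zero]
end

section
/- Inverse formula for the FX-reprogrammed cipher (Appendix B.2 of the paper): Without any distinctness hypotheses on the transcript, the inverse of E^{T_j} factors as (E^{T_j})⁻¹ = swap(x_j ⊕ k₁, (E^{T_{j−1}})⁻¹(y_j ⊕ k₂)) ∘ swap(x_{j−1} ⊕ k₁, (E^{T_{j−2}})⁻¹(y_{j−1} ⊕ k₂)) ∘ ⋯ ∘ swap(x₁ ⊕ k₁, E⁻¹(y₁ ⊕ k₂)) ∘ E⁻¹, where the transposition with index i = j is applied last (outermost) and E⁻¹ first. -/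
/-- The product `swap(x_i ⊕ k₁, (E^{T_{i-1}})⁻¹(y_i ⊕ k₂)) ∘ ⋯ ∘
swap(x₁ ⊕ k₁, E⁻¹(y₁ ⊕ k₂)) ∘ E⁻¹`, with the transposition of index `i`
outermost and `E⁻¹` innermost. -/
def fxInvProd {V : Type*} [DecidableEq V] [Add V]
    (E : Equiv.Perm V) (k₁ k₂ : V) (x y : ℕ → V) : ℕ → Equiv.Perm V
  | 0 => E⁻¹
  | i + 1 =>
      Equiv.swap (x (i + 1) + k₁) ((fxReprog E k₁ k₂ x y i)⁻¹ (y (i + 1) + k₂)) *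
        fxInvProd E k₁ k₂ x y i

theorem Equiv.Perm.inv_swap_apply_mul {V : Type*} [DecidableEq V] (f : Equiv.Perm V) (a b : V) :
    (Equiv.swap (f a) b * f)⁻¹ = Equiv.swap a (f⁻¹ b) * f⁻¹ :=
  calc (Equiv.swap (f a) b * f)⁻¹ = f⁻¹ * Equiv.swap (f a) b := by
        rw [mul_inv_rev, Equiv.swap_inv]
    _ = Equiv.swap (f⁻¹ (f a)) (f⁻¹ b) * f⁻¹ := by
        rw [Equiv.swap_apply_apply, inv_inv, mul_inv_cancel_right]
    _ = Equiv.swap a (f⁻¹ b) * f⁻¹ := by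
        simp only [Equiv.Perm.coe_inv, Equiv.symm_apply_apply]

theorem fxReprog_inv {V : Type*} [DecidableEq V] [Add V]
    (E : Equiv.Perm V) (k₁ k₂ : V) (x y : ℕ → V) (j : ℕ) :
    (fxReprog E k₁ k₂ x y j)⁻¹ = fxInvProd E k₁ k₂ x y j := by
  induction j with
  | zero => rfl
  | succ i ih =>
    rw [fxReprog, fxInvProd, Equiv.Perm.inv_swap_apply_mul, ih]

theorem fx_inverse_formula_general {n j : ℕ}
    (E : Equiv.Perm (Fin n → ZMod 2)) (k₁ k₂ : Fin n → ZMod 2)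
    (x y : ℕ → Fin n → ZMod 2) :
    (fxReprog E k₁ k₂ x y j)⁻¹ = fxInvProd E k₁ k₂ x y j :=
  fxReprog_inv E k₁ k₂ x y j

/-- Inverse formula for the FX-reprogrammed cipher (Appendix B.2): without any
distinctness hypotheses on the transcript,
`(E^{T_j})⁻¹ = swap(x_j ⊕ k₁, (E^{T_{j-1}})⁻¹(y_j ⊕ k₂)) ∘ ⋯ ∘
swap(x₁ ⊕ k₁, E⁻¹(y₁ ⊕ k₂)) ∘ E⁻¹`. -/
theorem fx_inverse_formula {n j : ℕ} (hn : 1 ≤ n)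
    (E : Equiv.Perm (Fin n → ZMod 2)) (k₁ k₂ : Fin n → ZMod 2)
    (x y : ℕ → Fin n → ZMod 2) :
    (fxReprog E k₁ k₂ x y j)⁻¹ = fxInvProd E k₁ k₂ x y j :=
  fx_inverse_formula_general E k₁ k₂ x y
end

section
/- FX inverse-direction hybrid identity (core of Lemma 11 of the paper): Fix y_{j+1} ∈ V with y_{j+1} ∉ {y₁, …, y_j} and s ∈ V with s ∉ {y₁ ⊕ k₂, …, y_j ⊕ k₂}. Let E' be the permutation of V determined by E'⁻¹ = E⁻¹ ∘ swap(y_{j+1} ⊕ k₂, s) (equivalently E' = E ∘ swap(E⁻¹(y_{j+1} ⊕ k₂), E⁻¹(s))), and define E'^{T_r} by the same recursion with E replaced by E'. Set x_{j+1} = (E^{T_j})⁻¹(s) ⊕ k₁ and E^{T_{j+1}} = swap(E^{T_j}(x_{j+1} ⊕ k₁), y_{j+1} ⊕ k₂) ∘ E^{T_j}. Then E'^{T_j} = E^{T_{j+1}} as permutations of V. -/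
/-!
Writing `σ = swap(y_{j+1} ⊕ k₂, s)`, we have `E' = σ ∘ E`, and `σ` fixes every reprogrammed
output `y_i ⊕ k₂` with `i ≤ j`. Post-composing with such a `σ` commutes with each reprogramming
step, since `swap(σ u, v) ∘ σ = σ ∘ swap(u, v)` whenever `σ v = v`; hence `E'^{T_j} = σ ∘ E^{T_j}`.
Finally `E^{T_j}(x_{j+1} ⊕ k₁) = s`, so `σ ∘ E^{T_j}` is exactly `E^{T_{j+1}}`.
-/

theorem Equiv.swap_apply_mul_of_apply_eq_self {α : Type*} [DecidableEq α] {σ : Equiv.Perm α}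
    {v : α} (hv : σ v = v) (u : α) :
    Equiv.swap (σ u) v * σ = σ * Equiv.swap u v := by
  rw [Equiv.mul_swap_eq_swap_mul, hv]

theorem fxReprog_mul_left {V : Type*} [DecidableEq V] [Add V] {σ E : Equiv.Perm V}
    {k₁ k₂ : V} {x y : ℕ → V} {r : ℕ} (hσ : ∀ i, 1 ≤ i → i ≤ r → σ (y i + k₂) = y i + k₂) :
    fxReprog (σ * E) k₁ k₂ x y r = σ * fxReprog E k₁ k₂ x y r := by
  induction r with
  | zero => rfl
  | succ r ih =>
    rw [fxReprog, fxReprog, ih fun i h1 h2 => hσ i h1 (by omega), Equiv.Perm.mul_apply,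
      ← mul_assoc, Equiv.swap_apply_mul_of_apply_eq_self (hσ (r + 1) (by omega) le_rfl),
      mul_assoc]

theorem ZMod.pi_two_add_add_cancel_right {ι : Type*} (a b : ι → ZMod 2) : a + b + b = a := by
  ext i
  exact CharTwo.add_cancel_right (a i) (b i)

theorem fx_inverse_hybrid_identity_general {n j : ℕ}
    (E : Equiv.Perm (Fin n → ZMod 2)) (k₁ k₂ : Fin n → ZMod 2)
    (x y : ℕ → Fin n → ZMod 2) (s : Fin n → ZMod 2)
    (hyj : ∀ i, 1 ≤ i → i ≤ j → y (j + 1) ≠ y i)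
    (hs : ∀ i, 1 ≤ i → i ≤ j → s ≠ y i + k₂)
    (E' : Equiv.Perm (Fin n → ZMod 2))
    (hE' : E'⁻¹ = E⁻¹ * Equiv.swap (y (j + 1) + k₂) s)
    (xj1 : Fin n → ZMod 2)
    (hxj1 : xj1 = (fxReprog E k₁ k₂ x y j)⁻¹ s + k₁) :
    fxReprog E' k₁ k₂ x y j =
      Equiv.swap (fxReprog E k₁ k₂ x y j (xj1 + k₁)) (y (j + 1) + k₂) *
        fxReprog E k₁ k₂ x y j := by
  have hE'_eq : E' = Equiv.swap (y (j + 1) + k₂) s * E := by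
    rw [← inv_inv E', hE', mul_inv_rev, inv_inv, Equiv.swap_inv]
  have hfix : ∀ i, 1 ≤ i → i ≤ j →
      Equiv.swap (y (j + 1) + k₂) s (y i + k₂) = y i + k₂ := fun i h1 h2 =>
    Equiv.swap_apply_of_ne_of_ne (fun h => hyj i h1 h2 (add_right_cancel h).symm)
      (hs i h1 h2).symm
  have hs_image : fxReprog E k₁ k₂ x y j (xj1 + k₁) = s := by
    rw [hxj1, ZMod.pi_two_add_add_cancel_right, Equiv.Perm.coe_inv, Equiv.apply_symm_apply]
  rw [hE'_eq, fxReprog_mul_left hfix, hs_image, Equiv.swap_comm]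

/-- FX inverse-direction hybrid identity (core of Lemma 11): for a fresh inverse
query `y_{j+1}` and resampling point `s ∉ {y₁ ⊕ k₂, …, y_j ⊕ k₂}`, let `E'` be the
permutation with `E'⁻¹ = E⁻¹ ∘ swap(y_{j+1} ⊕ k₂, s)`, set
`x_{j+1} = (E^{T_j})⁻¹(s) ⊕ k₁` and
`E^{T_{j+1}} = swap(E^{T_j}(x_{j+1} ⊕ k₁), y_{j+1} ⊕ k₂) ∘ E^{T_j}`.
Then `E'^{T_j} = E^{T_{j+1}}` as permutations. -/
theorem fx_inverse_hybrid_identity {n j : ℕ} (hn : 1 ≤ n)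
    (E : Equiv.Perm (Fin n → ZMod 2)) (k₁ k₂ : Fin n → ZMod 2)
    (x y : ℕ → Fin n → ZMod 2) (s : Fin n → ZMod 2)
    (hyj : ∀ i, 1 ≤ i → i ≤ j → y (j + 1) ≠ y i)
    (hs : ∀ i, 1 ≤ i → i ≤ j → s ≠ y i + k₂)
    (E' : Equiv.Perm (Fin n → ZMod 2))
    (hE' : E'⁻¹ = E⁻¹ * Equiv.swap (y (j + 1) + k₂) s)
    (xj1 : Fin n → ZMod 2)
    (hxj1 : xj1 = (fxReprog E k₁ k₂ x y j)⁻¹ s + k₁) :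
    fxReprog E' k₁ k₂ x y j =
      Equiv.swap (fxReprog E k₁ k₂ x y j (xj1 + k₁)) (y (j + 1) + k₂) *
        fxReprog E k₁ k₂ x y j :=
  fx_inverse_hybrid_identity_general E k₁ k₂ x y s hyj hs E' hE' xj1 hxj1
end

section
/- XOR-universality of the idealized XEX2 hash (Lemma 2 of the paper): Let F be a finite field of characteristic 2, let α ∈ F be nonzero, let i₁, i₂ ∈ F and j₁, j₂ ∈ ℕ with (i₁, j₁) ≠ (i₂, j₂), and assume that if i₁ = i₂ then α^{j₁} ≠ α^{j₂}. Then for every z ∈ F, the number of permutations π of F satisfying α^{j₁}·π(i₁) + α^{j₂}·π(i₂) = z, multiplied by (|F| − 1), is at most the total number of permutations of F. Equivalently, for a uniformly random permutation π of F, the probability that α^{j₁}·π(i₁) + α^{j₂}·π(i₂) = z is at most 1/(|F| − 1); i.e. the hash family h_π(i, j) = α^j·π(i) is 1/(|F| − 1)-XOR universal. -/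
/-!
Every admissible permutation `π` spawns `|F| - 1` permutations `swap (π k) y * π`, one for each
`y` outside an excluded value, and these are pairwise distinct across all `π`: such a permutation
sends `k` to `y`, and `π k` can be read off from it, which then gives back `π`. For
`i₁ ≠ i₂` take `k = i₂`, exclude `y = π i₁`, and recover `π i₂` from the hash equation once `π i₁`
is known. For `i₁ = i₂` the equation reads `(α^{j₁} + α^{j₂}) π(i₁) = z`, and in characteristic 2
the coefficient is nonzero because `α^{j₁} ≠ α^{j₂}`, so `π i₁` is a fixed constant.
-/

open Equiv

theorem Equiv.Perm.ncard_mul_card_sub_one_le_card_of_swap_mul_recover {X : Type*} [Fintype X]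
    [DecidableEq X] (S : Set (Perm X)) (k : X) (excluded recover : Perm X → X)
    (h_recover : ∀ π ∈ S, ∀ y ≠ excluded π, recover (swap (π k) y * π) = π k) :
    S.ncard * (Fintype.card X - 1) ≤ Nat.card (Perm X) := by
  classical
  let Φ : (Σ π : S, {y // y ≠ excluded π}) → Perm X := fun p => swap (p.1.1 k) p.2.1 * p.1.1
  have hΦ : Function.Injective Φ := by
    rintro ⟨⟨π, hπ⟩, y, hy⟩ ⟨⟨π', hπ'⟩, y', hy'⟩ h
    have hk : π k = π' k := by
      rw [← h_recover π hπ y hy, ← h_recover π' hπ' y' hy']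
      exact congrArg recover h
    have hy : y = y' := by simpa [Φ, hk] using congrArg (· k) h
    subst hy
    obtain rfl : π = π' := by simpa [Φ, hk] using h
    rfl
  calc S.ncard * (Fintype.card X - 1)
      = Fintype.card (Σ π : S, {y // y ≠ excluded π}) := by
        simp [Fintype.card_sigma, Fintype.card_subtype_compl, Set.ncard_eq_toFinset_card']
    _ ≤ Nat.card (Perm X) := by
        rw [Nat.card_eq_fintype_card]
        exact Fintype.card_le_of_injective Φ hΦ

theorem xex2_ideal_hash_xor_universal_general {F : Type*} [Field F] [Fintype F] [CharP F 2]
    (α : F) (hα : α ≠ 0) (i₁ i₂ : F) (j₁ j₂ : ℕ)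
    (hij : i₁ = i₂ → α ^ j₁ ≠ α ^ j₂) (z : F) :
    Set.ncard {π : Equiv.Perm F | α ^ j₁ * π i₁ + α ^ j₂ * π i₂ = z} *
        (Fintype.card F - 1) ≤
      Nat.card (Equiv.Perm F) := by
  classical
  by_cases hi : i₁ = i₂
  · subst hi
    have hsum : α ^ j₁ + α ^ j₂ ≠ 0 := CharTwo.add_eq_zero.not.mpr (hij rfl)
    refine Perm.ncard_mul_card_sub_one_le_card_of_swap_mul_recover _ i₁
      (fun _ => z / (α ^ j₁ + α ^ j₂)) (fun _ => z / (α ^ j₁ + α ^ j₂)) ?_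
    intro π (hπ : _ = z) _ _
    rw [div_eq_iff hsum]
    linear_combination -hπ
  · refine Perm.ncard_mul_card_sub_one_le_card_of_swap_mul_recover _ i₂
      (· i₁) (fun σ => (z - α ^ j₁ * σ i₁) / α ^ j₂) ?_
    intro π (hπ : _ = z) y hy
    have h_fix : (swap (π i₂) y * π) i₁ = π i₁ :=
      swap_apply_of_ne_of_ne (π.injective.ne hi) hy.symm
    rw [h_fix, div_eq_iff (pow_ne_zero _ hα)]
    linear_combination -hπ

/-- XOR-universality of the idealized XEX2 hash (Lemma 2): for a finite field `F`
of characteristic 2, a nonzero `α ∈ F`, and distinct index pairs `(i₁, j₁) ≠ (i₂, j₂)`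
with `α^{j₁} ≠ α^{j₂}` whenever `i₁ = i₂`, for every target `z` the number of
permutations `π` of `F` with `α^{j₁}·π(i₁) + α^{j₂}·π(i₂) = z`, multiplied by
`|F| − 1`, is at most the total number of permutations of `F`; i.e. the hash family
`h_π(i, j) = α^j · π(i)` is `1/(|F| − 1)`-XOR universal. -/
theorem xex2_ideal_hash_xor_universal {F : Type*} [Field F] [Fintype F] [CharP F 2]
    (α : F) (hα : α ≠ 0) (i₁ i₂ : F) (j₁ j₂ : ℕ)
    (hne : (i₁, j₁) ≠ (i₂, j₂))
    (hij : i₁ = i₂ → α ^ j₁ ≠ α ^ j₂) (z : F) :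
    Set.ncard {π : Equiv.Perm F | α ^ j₁ * π i₁ + α ^ j₂ * π i₂ = z} *
        (Fintype.card F - 1) ≤
      Nat.card (Equiv.Perm F) :=
  xex2_ideal_hash_xor_universal_general α hα i₁ i₂ j₁ j₂ hij z
end

section
/- Collision (bad-event) bound for LRW transcripts (from the proof of Theorem 8 of the paper): Let K be a nonempty finite set of hash keys and h : K × 𝒯 → V a family that is 2^{-n}-XOR universal, i.e. for all tweaks τ ≠ τ' and every z ∈ V, 2^n · |{k' ∈ K : h(k', τ) ⊕ h(k', τ') = z}| ≤ |K|. Let (τ₁, x₁, y₁), …, (τ_j, x_j, y_j) be a transcript such that for all a ≠ b with τ_a = τ_b one has x_a ≠ x_b and y_a ≠ y_b. Then the number of keys k' ∈ K for which the bad event Bad_j occurs — namely, there exist a ≠ b with x_a ⊕ h(k', τ_a) = x_b ⊕ h(k', τ_b) or y_a ⊕ h(k', τ_a) = y_b ⊕ h(k', τ_b) — satisfies 2^n · |{k' ∈ K : Bad_j}| ≤ j² · |K|. Equivalently, for a uniformly random k' ∈ K, Pr[Bad_j] ≤ j²/2^n. -/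
/-! Over `(ZMod 2)^n`, the collision `x_a ⊕ h(k', τ_a) = x_b ⊕ h(k', τ_b)` is the event
`h(k', τ_a) ⊕ h(k', τ_b) = x_a ⊕ x_b`. For `τ_a ≠ τ_b` XOR-universality bounds its probability
by `2^{-n}`; for `τ_a = τ_b` it would force `x_a = x_b`, so it is impossible. Collisions are
symmetric in `a, b`, so charging the input collision of `{a, b}` to the ordered pair `(a, b)`
with `a < b` and the output collision to `(b, a)` covers `Bad_j` by `j (j - 1)` such events, and
the union bound gives `j (j - 1) / 2^n ≤ j² / 2^n`. -/

open Finset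

lemma mul_ncard_le_card_mul_of_subset_biUnion {ι α : Type*} [Finite α] {S : Set α}
    {s : Finset ι} {T : ι → Set α} {c N : ℕ} (hS : S ⊆ ⋃ i ∈ s, T i)
    (hT : ∀ i ∈ s, c * (T i).ncard ≤ N) : c * S.ncard ≤ #s * N :=
  calc c * S.ncard ≤ c * (⋃ i ∈ s, T i).ncard := Nat.mul_le_mul_left _ (Set.ncard_le_ncard hS)
    _ ≤ c * ∑ i ∈ s, (T i).ncard := Nat.mul_le_mul_left _ (s.set_ncard_biUnion_le T)
    _ = ∑ i ∈ s, c * (T i).ncard := mul_sum _ _ _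
    _ ≤ ∑ _i ∈ s, N := sum_le_sum hT
    _ = #s * N := by rw [sum_const, smul_eq_mul]

lemma ZModModule.add_eq_add_iff_add_eq_add {V : Type*} [AddCommGroup V] [Module (ZMod 2) V]
    (a b u v : V) : a + u = b + v ↔ u + v = a + b := by
  rw [add_comm a b, ← ZModModule.sub_eq_add u v, ← ZModModule.sub_eq_add b a,
    sub_eq_sub_iff_add_eq_add, add_comm u a]

section Collisions

variable {K 𝒯 V ι : Type*}

def maskCollisions [Add V] (h : K → 𝒯 → V) (τ : ι → 𝒯) (x : ι → V) (a b : ι) : Set K :=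
  {k | x a + h k (τ a) = x b + h k (τ b)}

lemma maskCollisions_comm [Add V] (h : K → 𝒯 → V) (τ : ι → 𝒯) (x : ι → V) (a b : ι) :
    maskCollisions h τ x a b = maskCollisions h τ x b a := by
  ext
  exact eq_comm

lemma collisionKeys_subset_biUnion [Add V] [LinearOrder ι] {h : K → 𝒯 → V} (τ : ι → 𝒯)
    (x y : ι → V) (s : Finset ι) :
    {k | ∃ a ∈ s, ∃ b ∈ s, a ≠ b ∧ (k ∈ maskCollisions h τ x a b ∨ k ∈ maskCollisions h τ y a b)}
      ⊆ ⋃ p ∈ s.offDiag,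
          if p.1 < p.2 then maskCollisions h τ x p.1 p.2 else maskCollisions h τ y p.1 p.2 := by
  rintro k ⟨a, ha, b, hb, hab, hk⟩
  have hmem : ∀ {a b}, a ∈ s → b ∈ s → a ≠ b → (a, b) ∈ s.offDiag := fun ha hb hab ↦
    mem_offDiag.2 ⟨ha, hb, hab⟩
  rcases hk with hk | hk <;> rcases hab.lt_or_gt with hlt | hlt
  · exact Set.mem_biUnion (hmem ha hb hab) (by simpa [hlt] using hk)
  · exact Set.mem_biUnion (hmem hb ha hab.symm)
      (by simpa [hlt, maskCollisions_comm h τ x b a] using hk)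
  · exact Set.mem_biUnion (hmem hb ha hab.symm)
      (by simpa [hlt.not_gt, maskCollisions_comm h τ y b a] using hk)
  · exact Set.mem_biUnion (hmem ha hb hab) (by simpa [hlt.not_gt] using hk)

variable [AddCommGroup V] [Module (ZMod 2) V] [Fintype K] {h : K → 𝒯 → V} {c : ℕ}

lemma mul_ncard_maskCollisions_le
    (hxu : ∀ τ τ' : 𝒯, τ ≠ τ' → ∀ z : V, c * {k : K | h k τ + h k τ' = z}.ncard ≤ Fintype.card K)
    {τ : ι → 𝒯} {x : ι → V} {a b : ι} (hx : τ a = τ b → x a ≠ x b) :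
    c * (maskCollisions h τ x a b).ncard ≤ Fintype.card K := by
  by_cases hτ : τ a = τ b
  · have hempty : maskCollisions h τ x a b = ∅ :=
      Set.eq_empty_of_forall_notMem fun k hk ↦
        hx hτ (add_right_cancel (by rwa [maskCollisions, Set.mem_ofPred_eq, hτ] at hk))
    simp [hempty]
  · simpa only [maskCollisions, ZModModule.add_eq_add_iff_add_eq_add] using
      hxu _ _ hτ (x a + x b)

lemma mul_ncard_collisionKeys_le [LinearOrder ι]
    (hxu : ∀ τ τ' : 𝒯, τ ≠ τ' → ∀ z : V, c * {k : K | h k τ + h k τ' = z}.ncard ≤ Fintype.card K)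
    (τ : ι → 𝒯) (x y : ι → V) (s : Finset ι)
    (htr : ∀ a ∈ s, ∀ b ∈ s, a ≠ b → τ a = τ b → x a ≠ x b ∧ y a ≠ y b) :
    c * {k | ∃ a ∈ s, ∃ b ∈ s, a ≠ b ∧
        (k ∈ maskCollisions h τ x a b ∨ k ∈ maskCollisions h τ y a b)}.ncard ≤
      #s.offDiag * Fintype.card K := by
  refine mul_ncard_le_card_mul_of_subset_biUnion (collisionKeys_subset_biUnion τ x y s) ?_
  rintro ⟨a, b⟩ hp
  obtain ⟨ha, hb, hab⟩ := mem_offDiag.1 hp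
  split_ifs
  · exact mul_ncard_maskCollisions_le hxu fun hτ ↦ (htr a ha b hb hab hτ).1
  · exact mul_ncard_maskCollisions_le hxu fun hτ ↦ (htr a ha b hb hab hτ).2

end Collisions

theorem lrw_bad_event_bound_general {n j : ℕ} {𝒯 K : Type*}
    [Fintype K]
    (h : K → 𝒯 → Fin n → ZMod 2)
    (hxu : ∀ τ τ' : 𝒯, τ ≠ τ' → ∀ z : Fin n → ZMod 2,
      2 ^ n * Set.ncard {k' : K | h k' τ + h k' τ' = z} ≤ Fintype.card K)
    (τ : ℕ → 𝒯) (x y : ℕ → Fin n → ZMod 2)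
    (htr : ∀ a b, 1 ≤ a → a ≤ j → 1 ≤ b → b ≤ j → a ≠ b → τ a = τ b →
      x a ≠ x b ∧ y a ≠ y b) :
    2 ^ n * Set.ncard {k' : K | ∃ a b, 1 ≤ a ∧ a ≤ j ∧ 1 ≤ b ∧ b ≤ j ∧ a ≠ b ∧
        (x a + h k' (τ a) = x b + h k' (τ b) ∨
          y a + h k' (τ a) = y b + h k' (τ b))} ≤
      j ^ 2 * Fintype.card K := by
  have hbad : {k' : K | ∃ a b, 1 ≤ a ∧ a ≤ j ∧ 1 ≤ b ∧ b ≤ j ∧ a ≠ b ∧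
        (x a + h k' (τ a) = x b + h k' (τ b) ∨ y a + h k' (τ a) = y b + h k' (τ b))} =
      {k | ∃ a ∈ Icc 1 j, ∃ b ∈ Icc 1 j, a ≠ b ∧
        (k ∈ maskCollisions h τ x a b ∨ k ∈ maskCollisions h τ y a b)} := by
    ext
    simp [maskCollisions, and_assoc]
  have hpairs : #(Icc 1 j).offDiag ≤ j ^ 2 := by
    rw [offDiag_card, Nat.card_Icc, Nat.add_sub_cancel, sq]
    exact Nat.sub_le _ _
  rw [hbad]
  calc _ ≤ #(Icc 1 j).offDiag * Fintype.card K :=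
        mul_ncard_collisionKeys_le hxu τ x y _ fun a ha b hb ↦
          htr a b (mem_Icc.1 ha).1 (mem_Icc.1 ha).2 (mem_Icc.1 hb).1 (mem_Icc.1 hb).2
    _ ≤ j ^ 2 * Fintype.card K := Nat.mul_le_mul_right _ hpairs

/-- Collision (bad-event) bound for LRW transcripts (from the proof of Theorem 8):
if the hash family `h : K × 𝒯 → V` is `2^{-n}`-XOR universal and the transcript
`(τ_i, x_i, y_i)` has distinct inputs and distinct outputs at equal tweaks, then the
number of hash keys for which some collision `x_a ⊕ h(k', τ_a) = x_b ⊕ h(k', τ_b)`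
or `y_a ⊕ h(k', τ_a) = y_b ⊕ h(k', τ_b)` (with `a ≠ b`) occurs satisfies
`2^n · |{k' : Bad_j}| ≤ j² · |K|`, i.e. `Pr[Bad_j] ≤ j²/2^n` for uniform `k'`. -/
theorem lrw_bad_event_bound {n j : ℕ} (hn : 1 ≤ n) {𝒯 K : Type*}
    [Fintype K] [Nonempty K]
    (h : K → 𝒯 → Fin n → ZMod 2)
    (hxu : ∀ τ τ' : 𝒯, τ ≠ τ' → ∀ z : Fin n → ZMod 2,
      2 ^ n * Set.ncard {k' : K | h k' τ + h k' τ' = z} ≤ Fintype.card K)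
    (τ : ℕ → 𝒯) (x y : ℕ → Fin n → ZMod 2)
    (htr : ∀ a b, 1 ≤ a → a ≤ j → 1 ≤ b → b ≤ j → a ≠ b → τ a = τ b →
      x a ≠ x b ∧ y a ≠ y b) :
    2 ^ n * Set.ncard {k' : K | ∃ a b, 1 ≤ a ∧ a ≤ j ∧ 1 ≤ b ∧ b ≤ j ∧ a ≠ b ∧
        (x a + h k' (τ a) = x b + h k' (τ b) ∨
          y a + h k' (τ a) = y b + h k' (τ b))} ≤
      j ^ 2 * Fintype.card K :=
  lrw_bad_event_bound_general h hxu τ x y htr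
end

section
/- Probability that a fixed query point is reprogrammed, FX case (ε-bound in Lemma 6 of the paper): Let m, n ≥ 1, M = (ZMod 2)^m, V = (ZMod 2)^n, and let E : M → Perm(V) be any family of permutations of V indexed by M. Fix a transcript x₁, …, x_{j+1} ∈ V, y₁, …, y_{j+1} ∈ V. For a key triple K = (k₀, k₁, k₂) ∈ M × V × V, define the reprogrammed point set B(K) ⊆ {+1, −1} × M × V as B(K) = { (1, k₀, x_i ⊕ k₁), (1, k₀, (E k₀)⁻¹(y_i ⊕ k₂)), (−1, k₀, (E k₀)(x_i ⊕ k₁)), (−1, k₀, y_i ⊕ k₂) : 1 ≤ i ≤ j+1 }. Then for every fixed triple (a, k*, w) ∈ {+1, −1} × M × V, the number of key triples K ∈ M × V × V with (a, k*, w) ∈ B(K) is at most 2(j+1) · 2^n; equivalently, for a uniformly random key triple K, Pr[(a, k*, w) ∈ B(K)] ≤ 2(j+1)/2^{m+n}. -/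
private lemma zmod2_add_self {n : ℕ} (v : Fin n → ZMod 2) : v + v = 0 :=
  funext fun _ => CharTwo.add_self_eq_zero _

private lemma zmod2_cancel {n : ℕ} {u v t : Fin n → ZMod 2} (h : t = u + v) :
    v = u + t := by
  subst h; rw [← add_assoc, zmod2_add_self, zero_add]

/-- Probability that a fixed query point is reprogrammed, FX case (ε-bound in
Lemma 6): for any family of permutations `E : M → Perm V` and any transcript
`x₁, …, x_{j+1}, y₁, …, y_{j+1}`, and any fixed triple `(a, k*, w)`, the number of
key triples `K = (k₀, k₁, k₂)` whose reprogrammed point set `B(K)` contains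
`(a, k*, w)` is at most `2(j+1) · 2^n`; equivalently, for a uniformly random key
triple, `Pr[(a, k*, w) ∈ B(K)] ≤ 2(j+1)/2^{m+n}`. -/
theorem fx_reprogram_point_bound {m n j : ℕ} (hm : 1 ≤ m) (hn : 1 ≤ n)
    (E : (Fin m → ZMod 2) → Equiv.Perm (Fin n → ZMod 2))
    (x y : ℕ → Fin n → ZMod 2)
    (a : ℤ) (kstar : Fin m → ZMod 2) (w : Fin n → ZMod 2) :
    Set.ncard {K : (Fin m → ZMod 2) × (Fin n → ZMod 2) × (Fin n → ZMod 2) |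
        ∃ i, 1 ≤ i ∧ i ≤ j + 1 ∧
          ((a, kstar, w) = ((1 : ℤ), K.1, x i + K.2.1) ∨
           (a, kstar, w) = ((1 : ℤ), K.1, (E K.1).symm (y i + K.2.2)) ∨
           (a, kstar, w) = ((-1 : ℤ), K.1, (E K.1) (x i + K.2.1)) ∨
           (a, kstar, w) = ((-1 : ℤ), K.1, y i + K.2.2))} ≤
      2 * (j + 1) * 2 ^ n := by
  classical
  let V := Fin n → ZMod 2
  let u1 : V := if a = 1 then w else (E kstar).symm w
  let u2 : V := if a = 1 then (E kstar) w else w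
  let f : ℕ × Bool × V → (Fin m → ZMod 2) × V × V := fun p =>
    (kstar, if p.2.1 then (x p.1 + u1, p.2.2) else (p.2.2, y p.1 + u2))
  let T : Set (ℕ × Bool × V) := Set.Icc 1 (j + 1) ×ˢ Set.univ
  have hTfin : T.Finite := (Set.finite_Icc _ _).prod Set.finite_univ
  have hsub : {K : (Fin m → ZMod 2) × V × V |
        ∃ i, 1 ≤ i ∧ i ≤ j + 1 ∧
          ((a, kstar, w) = ((1 : ℤ), K.1, x i + K.2.1) ∨
           (a, kstar, w) = ((1 : ℤ), K.1, (E K.1).symm (y i + K.2.2)) ∨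
           (a, kstar, w) = ((-1 : ℤ), K.1, (E K.1) (x i + K.2.1)) ∨
           (a, kstar, w) = ((-1 : ℤ), K.1, y i + K.2.2))} ⊆ f '' T := by
    rintro ⟨k0, k1, k2⟩ ⟨i, hi1, hi2, hcase⟩
    have hiT : ∀ b v, (i, b, v) ∈ T := fun b v => ⟨⟨hi1, hi2⟩, trivial⟩
    rcases hcase with h | h | h | h
    · obtain ⟨ha, hk, hw⟩ : a = 1 ∧ kstar = k0 ∧ w = x i + k1 := by
        simpa [Prod.ext_iff] using h
      refine ⟨(i, true, k2), hiT _ _, ?_⟩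
      have hk1 : k1 = x i + w := zmod2_cancel hw
      simp [f, u1, ha, hk, hk1]
    · obtain ⟨ha, hk, hw⟩ : a = 1 ∧ kstar = k0 ∧ w = (E k0).symm (y i + k2) := by
        simpa [Prod.ext_iff] using h
      refine ⟨(i, false, k1), hiT _ _, ?_⟩
      have hEw : y i + k2 = (E k0) w := by rw [hw]; simp
      have hk2 : k2 = y i + (E k0) w := zmod2_cancel hEw.symm
      simp [f, u2, ha, hk, hk2]
    · obtain ⟨ha, hk, hw⟩ : a = -1 ∧ kstar = k0 ∧ w = (E k0) (x i + k1) := by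
        simpa [Prod.ext_iff] using h
      have ha1 : a ≠ 1 := by omega
      refine ⟨(i, true, k2), hiT _ _, ?_⟩
      have hEw : x i + k1 = (E k0).symm w := by rw [hw]; simp
      have hk1 : k1 = x i + (E k0).symm w := zmod2_cancel hEw.symm
      simp [f, u1, ha1, hk, hk1]
    · obtain ⟨ha, hk, hw⟩ : a = -1 ∧ kstar = k0 ∧ w = y i + k2 := by
        simpa [Prod.ext_iff] using h
      have ha1 : a ≠ 1 := by omega
      refine ⟨(i, false, k1), hiT _ _, ?_⟩
      have hk2 : k2 = y i + w := zmod2_cancel hw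
      simp [f, u2, ha1, hk, hk2]
  have hTcard : T.ncard = (j + 1) * (2 * 2 ^ n) := by
    have hTe : T = ↑((Finset.Icc 1 (j + 1)) ×ˢ (Finset.univ : Finset (Bool × V))) := by
      rw [Finset.coe_product, Finset.coe_Icc, Finset.coe_univ]
    rw [hTe, Set.ncard_coe_finset, Finset.card_product, Nat.card_Icc,
      Finset.card_univ, Fintype.card_prod, Fintype.card_bool]
    simp [V]
  calc Set.ncard _ ≤ (f '' T).ncard := Set.ncard_le_ncard hsub (hTfin.image f)
    _ ≤ T.ncard := Set.ncard_image_le hTfin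
    _ = (j + 1) * (2 * 2 ^ n) := hTcard
    _ = 2 * (j + 1) * 2 ^ n := by ring
end

section
/- Probability that a fixed query point is reprogrammed, LRW case (ε-bound in Lemma 18 of the paper): Let m, n ≥ 1, M = (ZMod 2)^m, V = (ZMod 2)^n, let K be a nonempty finite set of hash keys, and let h : K × 𝒯 → V be a uniform hash family, i.e. for every tweak τ and every v ∈ V, 2^n · |{k' ∈ K : h(k', τ) = v}| = |K|. Let E : M → Perm(V) be any family of permutations of V indexed by M, and fix a transcript (τ₁, x₁, y₁), …, (τ_{j+1}, x_{j+1}, y_{j+1}). For a key pair (k, k') ∈ M × K, define B(k, k') ⊆ {+1, −1} × M × V as B(k, k') = { (1, k, x_i ⊕ h(k', τ_i)), (1, k, (E k)⁻¹(y_i ⊕ h(k', τ_i))), (−1, k, (E k)(x_i ⊕ h(k', τ_i))), (−1, k, y_i ⊕ h(k', τ_i)) : 1 ≤ i ≤ j+1 }. Then for every fixed triple (a, k*, w) ∈ {+1, −1} × M × V, the number of key pairs (k, k') ∈ M × K with (a, k*, w) ∈ B(k, k') satisfies 2^n · |{(k, k') : (a, k*, w) ∈ B(k, k')}| ≤ 2(j+1)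 · |K|; equivalently, for a uniformly random key pair (k, k'), Pr[(a, k*, w) ∈ B(k, k')] ≤ 2(j+1)/2^{m+n}. -/
section Aux

variable {n : ℕ} {Kh V : Type*} [Fintype Kh]

private lemma two_fiber_bound {M : Type*} (g : Kh → V)
    (hg : ∀ v : V, 2 ^ n * Set.ncard {k' : Kh | g k' = v} = Fintype.card Kh)
    (kstar : M) (v1 v2 : V) :
    2 ^ n * Set.ncard {p : M × Kh | p.1 = kstar ∧ (g p.2 = v1 ∨ g p.2 = v2)} ≤
      2 * Fintype.card Kh := by
  have himg : {p : M × Kh | p.1 = kstar ∧ (g p.2 = v1 ∨ g p.2 = v2)} =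
      (fun k' => ((kstar, k') : M × Kh)) '' {k' : Kh | g k' = v1 ∨ g k' = v2} := by
    ext ⟨k, k'⟩
    simp only [Set.mem_setOf_eq, Set.mem_image]
    constructor
    · rintro ⟨rfl, hk⟩; exact ⟨k', hk, rfl⟩
    · rintro ⟨k'', hk, heq⟩
      obtain ⟨h1, h2⟩ := Prod.mk.injEq _ _ _ _ ▸ heq
      exact ⟨h1.symm, h2 ▸ hk⟩
  have hinj : Function.Injective (fun k' => ((kstar, k') : M × Kh)) := by
    intro a b hab; simpa using hab
  rw [himg, Set.ncard_image_of_injective _ hinj]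
  have hsub : {k' : Kh | g k' = v1 ∨ g k' = v2} =
      {k' : Kh | g k' = v1} ∪ {k' : Kh | g k' = v2} := rfl
  calc 2 ^ n * Set.ncard {k' : Kh | g k' = v1 ∨ g k' = v2}
      ≤ 2 ^ n * (Set.ncard {k' : Kh | g k' = v1} + Set.ncard {k' : Kh | g k' = v2}) := by
        apply Nat.mul_le_mul_left
        rw [hsub]; exact Set.ncard_union_le _ _
    _ = 2 * Fintype.card Kh := by rw [Nat.mul_add, hg v1, hg v2]; ring

end Aux

/-- Probability that a fixed query point is reprogrammed, LRW case (ε-bound in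
Lemma 18): for a uniform hash family `h : K × 𝒯 → V`, any family of permutations
`E : M → Perm V`, any transcript `(τ_i, x_i, y_i)` of length `j+1`, and any fixed
triple `(a, k*, w)`, the number of key pairs `(k, k')` whose reprogrammed point set
`B(k, k')` contains `(a, k*, w)` satisfies
`2^n · |{(k, k') : (a, k*, w) ∈ B(k, k')}| ≤ 2(j+1) · |K|`; equivalently, for a
uniformly random key pair, `Pr[(a, k*, w) ∈ B(k, k')] ≤ 2(j+1)/2^{m+n}`. -/
theorem lrw_reprogram_point_bound {m n j : ℕ} (hm : 1 ≤ m) (hn : 1 ≤ n)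
    {𝒯 Kh : Type*} [Fintype Kh] [Nonempty Kh]
    (h : Kh → 𝒯 → Fin n → ZMod 2)
    (huni : ∀ (τ : 𝒯) (v : Fin n → ZMod 2),
      2 ^ n * Set.ncard {k' : Kh | h k' τ = v} = Fintype.card Kh)
    (E : (Fin m → ZMod 2) → Equiv.Perm (Fin n → ZMod 2))
    (τ : ℕ → 𝒯) (x y : ℕ → Fin n → ZMod 2)
    (a : ℤ) (kstar : Fin m → ZMod 2) (w : Fin n → ZMod 2) :
    2 ^ n * Set.ncard {p : (Fin m → ZMod 2) × Kh |
        ∃ i, 1 ≤ i ∧ i ≤ j + 1 ∧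
          ((a, kstar, w) = ((1 : ℤ), p.1, x i + h p.2 (τ i)) ∨
           (a, kstar, w) = ((1 : ℤ), p.1, (E p.1).symm (y i + h p.2 (τ i))) ∨
           (a, kstar, w) = ((-1 : ℤ), p.1, (E p.1) (x i + h p.2 (τ i))) ∨
           (a, kstar, w) = ((-1 : ℤ), p.1, y i + h p.2 (τ i)))} ≤
      2 * (j + 1) * Fintype.card Kh := by
  -- self-inverse addition in (Fin n → ZMod 2)
  have h2 : ∀ v : Fin n → ZMod 2, v + v = 0 := by
    intro v; funext i
    have : ∀ z : ZMod 2, z + z = 0 := by decide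
    exact this (v i)
  have key : ∀ w' u v : Fin n → ZMod 2, (w' = u + v) ↔ v = w' + u := by
    intro w' u v
    constructor
    · intro hh; rw [hh, add_comm u v, add_assoc, h2 u, add_zero]
    · intro hh; rw [hh, add_comm w' u, ← add_assoc, h2 u, zero_add]
  -- the per-index predicate
  set P : ℕ → (Fin m → ZMod 2) × Kh → Prop := fun i p =>
    ((a, kstar, w) = ((1 : ℤ), p.1, x i + h p.2 (τ i)) ∨
     (a, kstar, w) = ((1 : ℤ), p.1, (E p.1).symm (y i + h p.2 (τ i))) ∨
     (a, kstar, w) = ((-1 : ℤ), p.1, (E p.1) (x i + h p.2 (τ i))) ∨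
     (a, kstar, w) = ((-1 : ℤ), p.1, y i + h p.2 (τ i))) with hP
  -- per-index bound
  have single : ∀ i : ℕ,
      2 ^ n * Set.ncard {p : (Fin m → ZMod 2) × Kh | P i p} ≤ 2 * Fintype.card Kh := by
    intro i
    by_cases ha1 : a = 1
    · subst ha1
      have hset : {p : (Fin m → ZMod 2) × Kh | P i p} =
          {p : (Fin m → ZMod 2) × Kh | p.1 = kstar ∧
            (h p.2 (τ i) = w + x i ∨ h p.2 (τ i) = E kstar w + y i)} := by
        ext ⟨k, k'⟩
        simp only [hP, Set.mem_setOf_eq, Prod.mk.injEq]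
        constructor
        · rintro (⟨-, hk, hw⟩ | ⟨-, hk, hw⟩ | ⟨hbad, -⟩ | ⟨hbad, -⟩)
          · exact ⟨hk.symm, Or.inl ((key _ _ _).mp hw)⟩
          · subst hk
            refine ⟨rfl, Or.inr ?_⟩
            rw [Equiv.eq_symm_apply] at hw
            exact (key _ _ _).mp hw
          all_goals exact absurd hbad (by decide)
        · rintro ⟨rfl, (hv | hv)⟩
          · exact Or.inl ⟨by norm_num, rfl, (key _ _ _).mpr hv⟩
          · refine Or.inr (Or.inl ⟨by norm_num, rfl, ?_⟩)
            rw [Equiv.eq_symm_apply]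
            exact (key _ _ _).mpr hv
      rw [hset]
      exact two_fiber_bound (fun k' => h k' (τ i)) (huni (τ i)) kstar _ _
    · by_cases ha2 : a = -1
      · subst ha2
        have hset : {p : (Fin m → ZMod 2) × Kh | P i p} =
            {p : (Fin m → ZMod 2) × Kh | p.1 = kstar ∧
              (h p.2 (τ i) = (E kstar).symm w + x i ∨ h p.2 (τ i) = w + y i)} := by
          ext ⟨k, k'⟩
          simp only [hP, Set.mem_setOf_eq, Prod.mk.injEq]
          constructor
          · rintro (⟨hbad, -⟩ | ⟨hbad, -⟩ | ⟨-, hk, hw⟩ | ⟨-, hk, hw⟩)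
            · exact absurd hbad (by decide)
            · exact absurd hbad (by decide)
            · subst hk
              refine ⟨rfl, Or.inl ?_⟩
              rw [← Equiv.symm_apply_eq] at hw
              exact (key _ _ _).mp hw
            · exact ⟨hk.symm, Or.inr ((key _ _ _).mp hw)⟩
          · rintro ⟨rfl, (hv | hv)⟩
            · refine Or.inr (Or.inr (Or.inl ⟨by norm_num, rfl, ?_⟩))
              rw [← Equiv.symm_apply_eq]
              exact (key _ _ _).mpr hv
            · exact Or.inr (Or.inr (Or.inr ⟨by norm_num, rfl, (key _ _ _).mpr hv⟩))
        rw [hset]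
        exact two_fiber_bound (fun k' => h k' (τ i)) (huni (τ i)) kstar _ _
      · have hset : {p : (Fin m → ZMod 2) × Kh | P i p} = ∅ := by
          ext ⟨k, k'⟩
          simp only [hP, Set.mem_setOf_eq, Prod.mk.injEq, Set.mem_empty_iff_false,
            iff_false]
          rintro (⟨hc, -⟩ | ⟨hc, -⟩ | ⟨hc, -⟩ | ⟨hc, -⟩) <;> [exact ha1 hc; exact ha1 hc;
            exact ha2 hc; exact ha2 hc]
        rw [hset]
        simp
  -- induction on j
  clear hm hn
  induction j with
  | zero =>
      have hset : {p : (Fin m → ZMod 2) × Kh | ∃ i, 1 ≤ i ∧ i ≤ 0 + 1 ∧ P i p} =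
          {p : (Fin m → ZMod 2) × Kh | P 1 p} := by
        ext p
        simp only [Set.mem_setOf_eq]
        constructor
        · rintro ⟨i, hi1, hi2, hp⟩
          have : i = 1 := by omega
          exact this ▸ hp
        · intro hp; exact ⟨1, le_refl 1, by omega, hp⟩
      rw [hset]
      simpa using single 1
  | succ j ih =>
      have hset : {p : (Fin m → ZMod 2) × Kh | ∃ i, 1 ≤ i ∧ i ≤ j + 1 + 1 ∧ P i p} =
          {p : (Fin m → ZMod 2) × Kh | ∃ i, 1 ≤ i ∧ i ≤ j + 1 ∧ P i p} ∪
          {p : (Fin m → ZMod 2) × Kh | P (j + 2) p} := by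
        ext p
        simp only [Set.mem_setOf_eq, Set.mem_union]
        constructor
        · rintro ⟨i, hi1, hi2, hp⟩
          rcases Nat.lt_or_ge i (j + 2) with hi | hi
          · exact Or.inl ⟨i, hi1, by omega, hp⟩
          · have : i = j + 2 := by omega
            exact Or.inr (this ▸ hp)
        · rintro (⟨i, hi1, hi2, hp⟩ | hp)
          · exact ⟨i, hi1, by omega, hp⟩
          · exact ⟨j + 2, by omega, by omega, hp⟩
      rw [hset]
      calc 2 ^ n * Set.ncard ({p : (Fin m → ZMod 2) × Kh | ∃ i, 1 ≤ i ∧ i ≤ j + 1 ∧ P i p} ∪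
              {p : (Fin m → ZMod 2) × Kh | P (j + 2) p})
          ≤ 2 ^ n * (Set.ncard {p : (Fin m → ZMod 2) × Kh | ∃ i, 1 ≤ i ∧ i ≤ j + 1 ∧ P i p} +
              Set.ncard {p : (Fin m → ZMod 2) × Kh | P (j + 2) p}) :=
            Nat.mul_le_mul_left _ (Set.ncard_union_le _ _)
        _ = 2 ^ n * Set.ncard {p : (Fin m → ZMod 2) × Kh | ∃ i, 1 ≤ i ∧ i ≤ j + 1 ∧ P i p} +
              2 ^ n * Set.ncard {p : (Fin m → ZMod 2) × Kh | P (j + 2) p} := by ring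
        _ ≤ 2 * (j + 1) * Fintype.card Kh + 2 * Fintype.card Kh :=
            Nat.add_le_add ih (single (j + 2))
        _ = 2 * (j + 1 + 1) * Fintype.card Kh := by ring
end
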